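/- arXiv:2602.07524 — 2 statements merged into one kernel-verified Lean document; each statement's English description precedes it below -/
import Mathlib

section
/- Let q ≥ 1 be an integer and c₀, x, u real constants. Define G_n(x) = √(32 log n)/n + ((3q-8)/(2q))·log(2 log n)/(n√(2 log n)) + 4x/(n√(2 log n)) and α_n = (1 + u/log n)·G_n(x)/2. Then, as n → ∞: exp(-n²α_n²/8 - (1/4)·log(n·α_n/2) + c₀) · n · (2 log n)^{1/2 - 1/q} → e^{c₀ - x - 2u}. -/
/-!
Writing `L = log n`, the scaling is arranged so that `n α_n / 2 = √(2L) (1 + δ_n)`, where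
`δ_n = (1 + u/L)(1 + w_n/(2L)) - 1` and `w_n = (3/8 - 1/q) log (2L) + x`. Taking logarithms,
the prefactor `n (2L)^{1/2 - 1/q}` cancels the leading term `L` of `n²α_n²/8 = L (1 + δ_n)²`,
and the `log (2L)` terms cancel exactly, leaving
`c₀ - x - (2Lδ_n - w_n + Lδ_n² + log (1 + δ_n)/4)`. Since `w_n = o(√L)`, one has
`√L δ_n → 0`, so the bracket tends to `2u`.
-/

open Real Filter Topology Asymptotics

lemma isLittleO_affine_log_sqrt (a b : ℝ) {c : ℝ} (hc : c ≠ 0) :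
    (fun y => a * log (c * y) + b) =o[atTop] sqrt := by
  have hlog : log =o[atTop] sqrt := by
    simpa only [← sqrt_eq_rpow] using isLittleO_log_rpow_atTop (one_half_pos : (0 : ℝ) < 1 / 2)
  have hconst : (fun _ : ℝ => a * log c + b) =o[atTop] sqrt :=
    isLittleO_const_left.2 (Or.inr (tendsto_norm_atTop_atTop.comp tendsto_sqrt_atTop))
  refine ((hlog.const_mul_left a).add hconst).congr' ?_ EventuallyEq.rfl
  filter_upwards [eventually_gt_atTop 0] with y hy
  rw [log_mul hc hy.ne']
  ring

noncomputable def scaleCorrection (u L w : ℝ) : ℝ := (1 + u / L) * (1 + w / (2 * L)) - 1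

section ScaleCorrection

variable {ι : Type*} {l : Filter ι} {L w : ι → ℝ} (u : ℝ)

lemma tendsto_sqrt_mul_scaleCorrection (hL : Tendsto L l atTop)
    (hw : w =o[l] fun i => √(L i)) :
    Tendsto (fun i => √(L i) * scaleCorrection u (L i) (w i)) l (𝓝 0) := by
  have hs : Tendsto (fun i => √(L i)) l atTop := tendsto_sqrt_atTop.comp hL
  have hr : Tendsto (fun i => w i / √(L i)) l (𝓝 0) := hw.tendsto_div_nhds_zero
  have huL : Tendsto (fun i => u / L i) l (𝓝 0) := by
    simpa only [div_eq_mul_inv, mul_zero, Pi.inv_apply] using hL.inv_tendsto_atTop.const_mul u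
  have hlim : Tendsto (fun i => u * (√(L i))⁻¹ + w i / √(L i) / 2
      + u / L i * (w i / √(L i) / 2)) l (𝓝 0) := by
    simpa using ((hs.inv_tendsto_atTop.const_mul u).add (hr.div_const 2)).add
      (huL.mul (hr.div_const 2))
  refine hlim.congr' ?_
  filter_upwards [hL.eventually_gt_atTop 0] with i hi
  have hsq : L i = √(L i) ^ 2 := (sq_sqrt hi.le).symm
  have hs0 : √(L i) ≠ 0 := (sqrt_pos.2 hi).ne'
  rw [scaleCorrection]
  generalize √(L i) = s at hsq hs0 ⊢
  rw [hsq]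
  field_simp
  ring

lemma tendsto_scaleCorrection (hL : Tendsto L l atTop) (hw : w =o[l] fun i => √(L i)) :
    Tendsto (fun i => scaleCorrection u (L i) (w i)) l (𝓝 0) := by
  have hs : Tendsto (fun i => √(L i)) l atTop := tendsto_sqrt_atTop.comp hL
  have hlim :
      Tendsto (fun i => √(L i) * scaleCorrection u (L i) (w i) * (√(L i))⁻¹) l (𝓝 0) := by
    simpa using (tendsto_sqrt_mul_scaleCorrection u hL hw).mul hs.inv_tendsto_atTop
  refine hlim.congr' ?_
  filter_upwards [hL.eventually_gt_atTop 0] with i hi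
  field_simp [(sqrt_pos.2 hi).ne']

lemma tendsto_gap_error (hL : Tendsto L l atTop) (hw : w =o[l] fun i => √(L i)) :
    Tendsto (fun i => 2 * L i * scaleCorrection u (L i) (w i) - w i
      + L i * scaleCorrection u (L i) (w i) ^ 2 + log (1 + scaleCorrection u (L i) (w i)) / 4)
      l (𝓝 (2 * u)) := by
  have hs : Tendsto (fun i => √(L i)) l atTop := tendsto_sqrt_atTop.comp hL
  have hr : Tendsto (fun i => w i / √(L i)) l (𝓝 0) := hw.tendsto_div_nhds_zero
  have hsδ := tendsto_sqrt_mul_scaleCorrection u hL hw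
  have hlog : Tendsto (fun i => log (1 + scaleCorrection u (L i) (w i))) l (𝓝 0) := by
    simpa using ((tendsto_scaleCorrection u hL hw).const_add 1).log (by norm_num)
  have hlim : Tendsto (fun i => 2 * u + u * (w i / √(L i) * (√(L i))⁻¹)
      + (√(L i) * scaleCorrection u (L i) (w i)) ^ 2
      + log (1 + scaleCorrection u (L i) (w i)) / 4) l (𝓝 (2 * u)) := by
    simpa using (((hr.mul hs.inv_tendsto_atTop).const_mul u).const_add (2 * u)).add
      (hsδ.pow 2) |>.add (hlog.div_const 4)
  refine hlim.congr' ?_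
  filter_upwards [hL.eventually_gt_atTop 0] with i hi
  have hlinear : 2 * L i * scaleCorrection u (L i) (w i) - w i
      = 2 * u + u * (w i / √(L i) * (√(L i))⁻¹) := by
    have hsq : L i = √(L i) ^ 2 := (sq_sqrt hi.le).symm
    have hs0 : √(L i) ≠ 0 := (sqrt_pos.2 hi).ne'
    rw [scaleCorrection]
    generalize √(L i) = s at hsq hs0 ⊢
    rw [hsq]
    field_simp
    ring
  rw [hlinear, mul_pow, sq_sqrt hi.le]

end ScaleCorrection

lemma half_mul_eq_sqrt_mul_one_add_scaleCorrection {q : ℕ} (hq : q ≠ 0) {x u N g a : ℝ}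
    (hN : 0 < log N)
    (hg : g = √(32 * log N) / N
      + ((3 * (q : ℝ) - 8) / (2 * q)) * log (2 * log N) / (N * √(2 * log N))
      + 4 * x / (N * √(2 * log N)))
    (ha : a = (1 + u / log N) * g / 2) :
    N * a / 2 = √(2 * log N)
      * (1 + scaleCorrection u (log N) ((3 / 8 - 1 / q) * log (2 * log N) + x)) := by
  have hN0 : N ≠ 0 := by rintro rfl; simp at hN
  have hq0 : (q : ℝ) ≠ 0 := Nat.cast_ne_zero.2 hq
  have h32 : √(32 * log N) = 4 * √(2 * log N) := by
    rw [show (32 : ℝ) * log N = 4 ^ 2 * (2 * log N) by ring, sqrt_mul (by positivity),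
      sqrt_sq (by norm_num)]
  have hsq : log N = √(2 * log N) ^ 2 / 2 := by rw [sq_sqrt (by positivity)]; ring
  have hs0 : √(2 * log N) ≠ 0 := (sqrt_pos.2 (by positivity)).ne'
  rw [ha, hg, h32, scaleCorrection]
  generalize log (2 * log N) = S
  generalize √(2 * log N) = s at hsq hs0 ⊢
  rw [hsq]
  field_simp
  ring

lemma exp_gap_eq {N a δ c r : ℝ} (hN : 0 < N) (hL : 0 < log N) (hδ : 0 < 1 + δ)
    (ha : N * a / 2 = √(2 * log N) * (1 + δ)) :
    exp (-N ^ 2 * a ^ 2 / 8 - 1 / 4 * log (N * a / 2) + c) * N * (2 * log N) ^ (1 / 2 - r)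
      = exp (c + (3 / 8 - r) * log (2 * log N)
          - (2 * log N * δ + log N * δ ^ 2 + log (1 + δ) / 4)) := by
  have h2L : 0 < 2 * log N := by positivity
  have hsq : N ^ 2 * a ^ 2 = 8 * log N * (1 + δ) ^ 2 := by
    rw [show N ^ 2 * a ^ 2 = 4 * (N * a / 2) ^ 2 by ring, ha, mul_pow, sq_sqrt h2L.le]
    ring
  have hlog : log (N * a / 2) = log (2 * log N) / 2 + log (1 + δ) := by
    rw [ha, log_mul (sqrt_pos.2 h2L).ne' hδ.ne', log_sqrt h2L.le]
  rw [rpow_def_of_pos h2L, mul_assoc, ← exp_log hN, ← exp_add, ← exp_add, exp_log hN,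
    neg_mul, hsq, hlog]
  congr 1
  ring

theorem gap_scaling_asymptotics
    (q : ℕ) (hq : 1 ≤ q) (c₀ x u : ℝ) (G α : ℕ → ℝ)
    (hG : ∀ n : ℕ, G n = Real.sqrt (32 * Real.log n) / n
        + ((3 * (q:ℝ) - 8) / (2 * q)) * Real.log (2 * Real.log n) / (n * Real.sqrt (2 * Real.log n))
        + 4 * x / (n * Real.sqrt (2 * Real.log n)))
    (hα : ∀ n : ℕ, α n = (1 + u / Real.log n) * G n / 2) :
    Filter.Tendsto
      (fun n : ℕ =>
        Real.exp (-(n:ℝ) ^ 2 * (α n) ^ 2 / 8 - (1 / 4) * Real.log ((n:ℝ) * α n / 2) + c₀)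
          * (n:ℝ) * (2 * Real.log n) ^ ((1:ℝ) / 2 - 1 / q))
      Filter.atTop (𝓝 (Real.exp (c₀ - x - 2 * u))) := by
  set L : ℕ → ℝ := fun n => log n
  set w : ℕ → ℝ := fun n => (3 / 8 - 1 / q) * log (2 * L n) + x
  have hL : Tendsto L atTop atTop := tendsto_log_atTop.comp tendsto_natCast_atTop_atTop
  have hw : w =o[atTop] fun n => √(L n) :=
    (isLittleO_affine_log_sqrt _ x two_ne_zero).comp_tendsto hL
  refine (((tendsto_gap_error u hL hw).const_sub (c₀ - x)).rexp).congr' ?_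
  filter_upwards [eventually_gt_atTop 0, hL.eventually_gt_atTop 0,
    (tendsto_scaleCorrection u hL hw).eventually (eventually_gt_nhds neg_one_lt_zero)]
    with n hn hLn hδn
  refine Eq.trans ?_ (exp_gap_eq (Nat.cast_pos.2 hn) hLn (by linarith)
    (half_mul_eq_sqrt_mul_one_add_scaleCorrection (by omega) hLn (hG n) (hα n))).symm
  congr 1
  ring
end

section
/- Let λ_1 < λ_2 < ... < λ_n be real numbers and a ≤ b reals with Λ = {i ∈ {1,...,n-1} : λ_i, λ_{i+1} ∈ [a,b]}. For i ∈ Λ and y > 0 set J_i(y) = (λ_i, λ_{i+1} - y) if y < λ_{i+1} - λ_i and J_i(y) = ∅ otherwise. Fix k ≥ 1 and a_1,...,a_k > 0, and let Σ_k = ⋃ ∏_{j=1}^k J_{i_j}(a_j), the union over all tuples (i_1,...,i_k) of pairwise distinct indices in Λ. Then (y_1,...,y_k) ∈ Σ_k if and only if: (i) y_1,...,y_k ∈ (a,b) and the intervals [y_j, y_j + a_j] are pairwise disjoint; (ii) no λ_l belongs to any [y_j, y_j + a_j]; and (iii) writing ỹ_0 = a < ỹ_1 < ... < ỹ_k < ỹ_{k+1}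 = b for the sorted values a, y_1, ..., y_k, b, every interval [ỹ_j, ỹ_{j+1}] with 0 ≤ j ≤ k contains at least one λ_l. -/
open Set

private lemma gap_no_between {m : ℕ} {l : Fin (m + 1) → ℝ} (hl : StrictMono l)
    (i : Fin m) (t : Fin (m + 1)) (h1 : l i.castSucc < l t) (h2 : l t < l i.succ) : False := by
  have ht1 : i.castSucc < t := hl.lt_iff_lt.mp h1
  have ht2 : t < i.succ := hl.lt_iff_lt.mp h2
  rw [Fin.lt_iff_val_lt_val] at ht1 ht2
  simp only [Fin.coe_castSucc, Fin.val_succ] at ht1 ht2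
  omega

private lemma succ_le_castSucc {m : ℕ} {i j : Fin m} (h : i < j) : i.succ ≤ j.castSucc := by
  rw [Fin.le_iff_val_le_val]
  rw [Fin.lt_iff_val_lt_val] at h
  simp only [Fin.coe_castSucc, Fin.val_succ]
  omega

private lemma exists_gap {m : ℕ} {l : Fin (m + 1) → ℝ} (hl : StrictMono l) {x : ℝ}
    (h1 : ∃ t, l t < x) (h2 : ∃ s, x < l s) :
    ∃ i : Fin m, l i.castSucc < x ∧ x ≤ l i.succ := by
  classical
  obtain ⟨s, hs⟩ := h2
  set S : Finset (Fin (m + 1)) := Finset.univ.filter (fun t => l t < x) with hS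
  have hne : S.Nonempty := by
    obtain ⟨t, ht⟩ := h1
    exact ⟨t, by simp [hS, ht]⟩
  set t := S.max' hne with htdef
  have htmem : t ∈ S := S.max'_mem hne
  have htlt : l t < x := by simpa [hS] using htmem
  have hts : t < s := hl.lt_iff_lt.mp (htlt.trans hs)
  have htm : (t : ℕ) < m := by
    rw [Fin.lt_iff_val_lt_val] at hts
    omega
  refine ⟨⟨(t : ℕ), htm⟩, ?_, ?_⟩
  · have hcast : (Fin.castSucc ⟨(t : ℕ), htm⟩) = t := by ext; simp
    rw [hcast]; exact htlt
  · by_contra hcon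
    push_neg at hcon
    have hmem2 : (Fin.succ ⟨(t : ℕ), htm⟩) ∈ S := by
      simp only [hS, Finset.mem_filter, Finset.mem_univ, true_and]
      exact hcon
    have hle := S.le_max' _ hmem2
    rw [← htdef, Fin.le_iff_val_le_val] at hle
    simp only [Fin.val_succ] at hle
    omega

/-- Characterization of the set `Σ_k(a_1,...,a_k)` (single-interval case of Lemma A.1).
The eigenvalues are `l 0 < l 1 < ... < l m`, indexed by `Fin (m+1)`; the gap with index
`i : Fin m` is `(l i.castSucc, l i.succ)`. -/
theorem sigma_k_characterization
    (m : ℕ) (l : Fin (m + 1) → ℝ) (hl : StrictMono l)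
    (a b : ℝ) (hab : a ≤ b)
    (k : ℕ) (hk : 1 ≤ k) (aa : Fin k → ℝ) (haa : ∀ j, 0 < aa j)
    (y : Fin k → ℝ) :
    (∃ i : Fin k → Fin m, Function.Injective i ∧
        (∀ j, l (i j).castSucc ∈ Set.Icc a b ∧ l (i j).succ ∈ Set.Icc a b) ∧
        (∀ j, y j ∈ Set.Ioo (l (i j).castSucc) (l (i j).succ - aa j)))
      ↔
    ((∀ j, y j ∈ Set.Ioo a b) ∧
      (∀ j j' : Fin k, j ≠ j' →
        Disjoint (Set.Icc (y j) (y j + aa j)) (Set.Icc (y j') (y j' + aa j'))) ∧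
      (∀ j : Fin k, ∀ i : Fin (m + 1), l i ∉ Set.Icc (y j) (y j + aa j)) ∧
      (∀ c ∈ insert a (insert b (Set.range y)),
        ∀ d ∈ insert a (insert b (Set.range y)), c < d →
          ∃ i : Fin (m + 1), l i ∈ Set.Icc c d)) := by
  constructor
  · rintro ⟨i, hinj, hab', hmem⟩
    have hsub : ∀ j, Set.Icc (y j) (y j + aa j) ⊆
        Set.Ioo (l (i j).castSucc) (l (i j).succ) := by
      intro j z hz
      obtain ⟨h1, h2⟩ := hmem j
      exact ⟨lt_of_lt_of_le h1 hz.1, by linarith [hz.2]⟩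
    refine ⟨?_, ?_, ?_, ?_⟩
    · intro j
      obtain ⟨ha1, hb1⟩ := hab' j
      obtain ⟨h1, h2⟩ := hmem j
      exact ⟨lt_of_le_of_lt ha1.1 h1, by linarith [haa j, hb1.2]⟩
    · intro j j' hjj'
      have hne : i j ≠ i j' := fun h => hjj' (hinj h)
      rw [Set.disjoint_left]
      intro z hz hz'
      have g1 := hsub j hz
      have g2 := hsub j' hz'
      rcases lt_or_gt_of_ne hne with h | h
      · have : l (i j).succ ≤ l (i j').castSucc := hl.monotone (succ_le_castSucc h)
        linarith [g1.2, g2.1]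
      · have : l (i j').succ ≤ l (i j).castSucc := hl.monotone (succ_le_castSucc h)
        linarith [g1.1, g2.2]
    · intro j t ht
      exact gap_no_between hl (i j) t (hsub j ht).1 (hsub j ht).2
    · intro c hc d hd hcd
      simp only [Set.mem_insert_iff, Set.mem_range] at hc hd
      have ybnd : ∀ j, a ≤ y j ∧ y j ≤ b := by
        intro j
        obtain ⟨ha1, hb1⟩ := hab' j
        obtain ⟨h1, h2⟩ := hmem j
        exact ⟨le_of_lt (lt_of_le_of_lt ha1.1 h1), by linarith [haa j, hb1.2]⟩
      rcases hc with rfl | rfl | ⟨j, rfl⟩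
      · rcases hd with rfl | rfl | ⟨j', rfl⟩
        · exact absurd hcd (lt_irrefl _)
        · exact ⟨(i ⟨0, hk⟩).castSucc, hab' ⟨0, hk⟩ |>.1⟩
        · exact ⟨(i j').castSucc, (hab' j').1.1, le_of_lt (hmem j').1⟩
      · rcases hd with rfl | rfl | ⟨j', rfl⟩
        · exact absurd hcd (not_lt_of_ge hab)
        · exact absurd hcd (lt_irrefl _)
        · exact absurd hcd (not_lt_of_ge (ybnd j').2)
      · rcases hd with rfl | rfl | ⟨j', rfl⟩
        · exact absurd hcd (not_lt_of_ge (ybnd j).1)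
        · refine ⟨(i j).succ, ?_, (hab' j).2.2⟩
          have := (hmem j).2
          linarith [haa j]
        · -- y j < y j'
          have hjne : j ≠ j' := by
            rintro rfl; exact absurd hcd (lt_irrefl _)
          have hne : i j ≠ i j' := fun h => hjne (hinj h)
          have hij : i j < i j' := by
            rcases lt_or_gt_of_ne hne with h | h
            · exact h
            · exfalso
              have : l (i j').succ ≤ l (i j).castSucc := hl.monotone (succ_le_castSucc h)
              have h1 := (hmem j).1
              have h2 := (hmem j').2
              linarith [haa j']
          refine ⟨(i j).succ, ?_, ?_⟩
          · have := (hmem j).2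
            linarith [haa j]
          · have hle : l (i j).succ ≤ l (i j').castSucc := hl.monotone (succ_le_castSucc hij)
            have := (hmem j').1
            linarith
  · rintro ⟨h1, h2, h3, h4⟩
    have hma : a ∈ insert a (insert b (Set.range y)) := Set.mem_insert _ _
    have hmb : b ∈ insert a (insert b (Set.range y)) :=
      Set.mem_insert_of_mem _ (Set.mem_insert _ _)
    have hmy : ∀ j, y j ∈ insert a (insert b (Set.range y)) := fun j =>
      Set.mem_insert_of_mem _ (Set.mem_insert_of_mem _ ⟨j, rfl⟩)
    have key : ∀ j, ∃ ii : Fin m,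
        (l ii.castSucc ∈ Set.Icc a b ∧ l ii.succ ∈ Set.Icc a b) ∧
        y j ∈ Set.Ioo (l ii.castSucc) (l ii.succ - aa j) := by
      intro j
      obtain ⟨t0, ht0⟩ := h4 a hma (y j) (hmy j) (h1 j).1
      have ht0lt : l t0 < y j := by
        rcases lt_or_eq_of_le ht0.2 with h | h
        · exact h
        · exact absurd ⟨le_of_eq h.symm, by linarith [haa j]⟩ (h3 j t0)
      obtain ⟨s0, hs0⟩ := h4 (y j) (hmy j) b hmb (h1 j).2
      have hs0gt : y j + aa j < l s0 := by
        by_contra hcon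
        push_neg at hcon
        exact h3 j s0 ⟨hs0.1, hcon⟩
      obtain ⟨ii, hii1, hii2⟩ := exists_gap hl ⟨t0, ht0lt⟩ ⟨s0, by linarith [haa j]⟩
      have hii2' : y j + aa j < l ii.succ := by
        by_contra hcon
        push_neg at hcon
        exact h3 j ii.succ ⟨hii2, hcon⟩
      refine ⟨ii, ⟨⟨?_, ?_⟩, ⟨?_, ?_⟩⟩, hii1, by linarith⟩
      · -- a ≤ l ii.castSucc : t0 ≤ ii.castSucc
        have htle : t0 ≤ ii.castSucc := by
          by_contra hcon
          push_neg at hcon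
          have : ii.castSucc < t0 := hcon
          exact gap_no_between hl ii t0 (hl this) (by linarith [haa j])
        exact le_trans ht0.1 (hl.monotone htle)
      · -- l ii.castSucc ≤ b
        linarith [(h1 j).2]
      · -- a ≤ l ii.succ
        linarith [(h1 j).1, haa j]
      · -- l ii.succ ≤ b : ii.succ ≤ s0
        have hsle : ii.succ ≤ s0 := by
          by_contra hcon
          push_neg at hcon
          exact gap_no_between hl ii s0 (by linarith [haa j]) (hl hcon)
        exact le_trans (hl.monotone hsle) hs0.2
    choose i hi using key
    refine ⟨i, ?_, fun j => (hi j).1, fun j => (hi j).2⟩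
    intro j j' heq
    by_contra hne
    rcases lt_trichotomy (y j) (y j') with hy | hy | hy
    · obtain ⟨t, ht⟩ := h4 (y j) (hmy j) (y j') (hmy j') hy
      have g1 := (hi j).2
      have g2 := (hi j').2
      rw [heq] at g1
      exact gap_no_between hl (i j') t (lt_of_lt_of_le g1.1 ht.1)
        (lt_of_le_of_lt ht.2 (by linarith [g2.2, haa j']))
    · have hd := h2 j j' hne
      rw [Set.disjoint_left] at hd
      exact hd ⟨le_refl _, by linarith [haa j]⟩ ⟨le_of_eq hy.symm, by linarith [haa j']⟩
    · obtain ⟨t, ht⟩ := h4 (y j') (hmy j') (y j) (hmy j) hy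
      have g1 := (hi j).2
      have g2 := (hi j').2
      rw [heq] at g1
      exact gap_no_between hl (i j') t (lt_of_lt_of_le g2.1 ht.1)
        (lt_of_le_of_lt ht.2 (by linarith [g1.2, haa j]))
end
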